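/- Let 0 < r < 1 and let T be an invertible bounded operator in C_{1,r} on a complex Hilbert space H. Then there exists a unique pair of mutually orthogonal closed subspaces H₁, H₂ of H with H = H₁ ⊕ H₂, both reducing T, such that: (1) (1+r²)‖x‖² = ‖Tx‖² + r²‖T⁻*x‖² for all x ∈ H₁ (i.e. T restricted to H₁ is of class 𝒞_{1,r}); and (2) there is no nonzero closed subspace L of H₂ reducing T with (1+r²)‖x‖² = ‖Tx‖² + r²‖T⁻*x‖² for all x ∈ L. Moreover, H₁ is maximal: every closed subspace L of H reducing T on which (1+r²)‖x‖² = ‖Tx‖² + r²‖T⁻*x‖² holds for all x ∈ L is contained in H₁. -/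

import Mathlib

/-!
With `D = (1 + r²) - T*T - r² T⁻¹T⁻*` one has `⟪D x, x⟫ = (1 + r²)‖x‖² - ‖Tx‖² - r²‖T⁻*x‖²`,
so the identity on a subspace `L` says that the quadratic form of `D` vanishes on `L`. If `L` is
closed and reduces `T`, its orthogonal projection commutes with `T` and `T*`, hence with `T⁻¹`,
`T⁻*` and `D`; so `L` is `D`-invariant and complex polarization forces `D = 0` on `L`. The closed
reducing subspaces satisfying the identity are therefore exactly the closed reducing subspaces of
`ker D`, and `H₁` is the largest reducing subspace of `ker D` (closed, since its closure is again
one), with `H₂ = H₁ᗮ`. For any other admissible pair, `H₁ ⊓ p.1ᗮ` is a reducing subspace of `p.2`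
satisfying the identity, so it vanishes and `p.1 = H₁`.
-/

open ContinuousLinearMap

variable {H : Type*} [NormedAddCommGroup H] [InnerProductSpace ℂ H] [CompleteSpace H]

/-- `T ∈ C_{1,r}`: `T` is invertible, `‖T‖ ≤ 1` and `‖r • T⁻¹‖ ≤ 1`. -/
def MemC1r (r : ℝ) (T : H →L[ℂ] H) : Prop :=
  IsUnit T ∧ ‖T‖ ≤ 1 ∧ ‖(r : ℂ) • Ring.inverse T‖ ≤ 1

/-- A closed subspace `L` reduces `T` if `L` is invariant under both `T` and `T*`. -/
def Reduces (T : H →L[ℂ] H) (L : Submodule ℂ H) : Prop :=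
  ∀ x ∈ L, T x ∈ L ∧ adjoint T x ∈ L

/-- `T` restricted to `L` is of class `𝒞_{1,r}`:
`(1+r²)‖x‖² = ‖Tx‖² + r²‖T⁻*x‖²` for all `x ∈ L`. -/
def RestrictedScriptC1r (r : ℝ) (T : H →L[ℂ] H) (L : Submodule ℂ H) : Prop :=
  ∀ x ∈ L, (1 + r ^ 2) * ‖x‖ ^ 2 = ‖T x‖ ^ 2 + r ^ 2 * ‖adjoint (Ring.inverse T) x‖ ^ 2

/-- The canonical decomposition pair: `p.1, p.2` are mutually orthogonal closed subspaces
summing to `H`, both reducing `T`, with `T|_{p.1} ∈ 𝒞_{1,r}` and `T|_{p.2}` a completely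
non-unitary `C_{1,r}`-contraction. -/
def CanonPair (r : ℝ) (T : H →L[ℂ] H) (p : Submodule ℂ H × Submodule ℂ H) : Prop :=
  IsClosed (p.1 : Set H) ∧ IsClosed (p.2 : Set H) ∧
  (∀ x ∈ p.1, ∀ y ∈ p.2, (inner ℂ x y : ℂ) = 0) ∧ p.1 ⊔ p.2 = ⊤ ∧
  Reduces T p.1 ∧ Reduces T p.2 ∧
  RestrictedScriptC1r r T p.1 ∧
  ¬∃ L : Submodule ℂ H, L ≠ ⊥ ∧ IsClosed (L : Set H) ∧ L ≤ p.2 ∧ Reduces T L ∧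
    RestrictedScriptC1r r T L

open Module.End

theorem Commute.ringInverse_right {M₀ : Type*} [MonoidWithZero M₀] {a b : M₀}
    (h : Commute a b) : Commute a (Ring.inverse b) := by
  by_cases hb : IsUnit b
  · obtain ⟨u, rfl⟩ := hb
    rw [Ring.inverse_unit]
    exact h.units_inv_right
  · rw [Ring.inverse_non_unit b hb]
    exact Commute.zero_right a

theorem LinearMap.apply_eq_zero_of_inner_map_self_eq_zero {V : Type*} [NormedAddCommGroup V]
    [InnerProductSpace ℂ V] {D : V →ₗ[ℂ] V} {L : Submodule ℂ V} (hL : L ∈ invtSubmodule D)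
    (h : ∀ x ∈ L, inner ℂ (D x) x = 0) : ∀ x ∈ L, D x = 0 := by
  have hres : D.restrict hL = 0 :=
    (inner_map_self_eq_zero _).1 fun x => h x x.2
  intro x hx
  exact congrArg Subtype.val (LinearMap.congr_fun hres ⟨x, hx⟩)

section Reducing

variable {T : H →L[ℂ] H} {L : Submodule ℂ H}

theorem reduces_iff :
    Reduces T L ↔ L ∈ invtSubmodule (T : H →ₗ[ℂ] H) ∧ L ∈ invtSubmodule (adjoint T : H →ₗ[ℂ] H) :=
  forall₂_and

theorem Reduces.adjoint (h : Reduces T L) : Reduces (adjoint T) L := by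
  rw [reduces_iff, adjoint_adjoint]
  exact (reduces_iff.1 h).symm

theorem Reduces.orthogonal (h : Reduces T L) : Reduces T Lᗮ :=
  reduces_iff.2 ⟨orthogonal_mem_invtSubmodule (reduces_iff.1 h).2,
    orthogonal_mem_invtSubmodule (by simpa using (reduces_iff.1 h).1)⟩

theorem Reduces.inf {L' : Submodule ℂ H} (h : Reduces T L) (h' : Reduces T L') :
    Reduces T (L ⊓ L') :=
  reduces_iff.2 ⟨invtSubmodule.inf_mem (reduces_iff.1 h).1 (reduces_iff.1 h').1,
    invtSubmodule.inf_mem (reduces_iff.1 h).2 (reduces_iff.1 h').2⟩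

theorem Reduces.commute_starProjection [L.HasOrthogonalProjection] (h : Reduces T L) :
    Commute L.starProjection T := by
  rw [IsIdempotentElem.commute_iff L.isIdempotentElem_starProjection,
    Submodule.range_starProjection, Submodule.ker_starProjection]
  exact ⟨(reduces_iff.1 h).1, (reduces_iff.1 h.orthogonal).1⟩

end Reducing

noncomputable def defect (r : ℝ) (T : H →L[ℂ] H) : H →L[ℂ] H :=
  (1 + r ^ 2) • 1 - adjoint T * T - r ^ 2 • (Ring.inverse T * adjoint (Ring.inverse T))

section Defect

variable {r : ℝ} {T : H →L[ℂ] H} {L : Submodule ℂ H}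

theorem inner_defect_apply_self (r : ℝ) (T : H →L[ℂ] H) (x : H) :
    inner ℂ (defect r T x) x =
      (((1 + r ^ 2) * ‖x‖ ^ 2 - ‖T x‖ ^ 2 - r ^ 2 * ‖adjoint (Ring.inverse T) x‖ ^ 2 : ℝ) : ℂ) := by
  have hD : defect r T x = (1 + r ^ 2) • x - adjoint T (T x) -
      r ^ 2 • Ring.inverse T (adjoint (Ring.inverse T) x) := rfl
  rw [hD, inner_sub_left, inner_sub_left, inner_smul_left_eq_smul, inner_smul_left_eq_smul,
    adjoint_inner_left, ← adjoint_inner_right (Ring.inverse T), inner_self_eq_norm_sq_to_K,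
    inner_self_eq_norm_sq_to_K, inner_self_eq_norm_sq_to_K, Complex.real_smul, Complex.real_smul]
  simp only [Complex.coe_algebraMap]
  push_cast
  ring

theorem restrictedScriptC1r_iff_inner_defect :
    RestrictedScriptC1r r T L ↔ ∀ x ∈ L, inner ℂ (defect r T x) x = 0 := by
  refine forall₂_congr fun x _ => ?_
  rw [inner_defect_apply_self, Complex.ofReal_eq_zero, sub_sub, sub_eq_zero]

theorem Reduces.commute_starProjection_defect [L.HasOrthogonalProjection] (h : Reduces T L) :
    Commute L.starProjection (defect r T) := by
  have hT := h.commute_starProjection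
  have hT' := h.adjoint.commute_starProjection
  have hinv := hT.ringInverse_right
  have hinv' : Commute L.starProjection (ContinuousLinearMap.adjoint (Ring.inverse T)) := by
    simpa [(isSelfAdjoint_starProjection L).star_eq, star_eq_adjoint] using hinv.star_star
  exact (((Commute.one_right _).smul_right _).sub_right (hT'.mul_right hT)).sub_right
    ((hinv.mul_right hinv').smul_right _)

theorem Reduces.mem_invtSubmodule_defect [L.HasOrthogonalProjection] (h : Reduces T L) :
    L ∈ invtSubmodule (defect r T : H →ₗ[ℂ] H) := by
  simpa using ((IsIdempotentElem.commute_iff L.isIdempotentElem_starProjection).1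
    h.commute_starProjection_defect).1

theorem Reduces.restrictedScriptC1r_iff_le_ker [L.HasOrthogonalProjection] (h : Reduces T L) :
    RestrictedScriptC1r r T L ↔ L ≤ (defect r T : H →ₗ[ℂ] H).ker := by
  rw [restrictedScriptC1r_iff_inner_defect]
  refine ⟨fun hL x hx => LinearMap.apply_eq_zero_of_inner_map_self_eq_zero
    h.mem_invtSubmodule_defect hL x hx, fun hL x hx => ?_⟩
  rw [show defect r T x = 0 from hL hx, inner_zero_left]

end Defect

def largestReducingSubspace (T : H →L[ℂ] H) (K : Submodule ℂ H) : Submodule ℂ H :=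
  sSup {L | Reduces T L ∧ L ≤ K}

section LargestReducingSubspace

variable {T : H →L[ℂ] H} {K L : Submodule ℂ H}

theorem le_largestReducingSubspace (h : Reduces T L) (hLK : L ≤ K) :
    L ≤ largestReducingSubspace T K :=
  le_sSup ⟨h, hLK⟩

theorem largestReducingSubspace_le : largestReducingSubspace T K ≤ K :=
  sSup_le fun _ hL => hL.2

theorem reduces_largestReducingSubspace : Reduces T (largestReducingSubspace T K) := by
  refine reduces_iff.2 ⟨(mem_invtSubmodule _).2 (sSup_le fun L hL => ?_),
    (mem_invtSubmodule _).2 (sSup_le fun L hL => ?_)⟩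
  · exact (reduces_iff.1 hL.1).1.trans (Submodule.comap_mono (le_sSup hL))
  · exact (reduces_iff.1 hL.1).2.trans (Submodule.comap_mono (le_sSup hL))

theorem isClosed_largestReducingSubspace (hK : IsClosed (K : Set H)) :
    IsClosed (largestReducingSubspace T K : Set H) := by
  set M := largestReducingSubspace T K
  have hred : Reduces T M.topologicalClosure := by
    obtain ⟨h, h'⟩ := reduces_iff.1 (reduces_largestReducingSubspace (T := T) (K := K))
    exact reduces_iff.2 ⟨Submodule.topologicalClosure_mem_invtSubmodule (f := T) h,
      Submodule.topologicalClosure_mem_invtSubmodule (f := adjoint T) h'⟩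
  have hle : M.topologicalClosure ≤ M :=
    le_largestReducingSubspace hred (M.topologicalClosure_minimal largestReducingSubspace_le hK)
  rw [← le_antisymm hle M.le_topologicalClosure]
  exact M.isClosed_topologicalClosure

end LargestReducingSubspace

noncomputable def scriptC1rPart (r : ℝ) (T : H →L[ℂ] H) : Submodule ℂ H :=
  largestReducingSubspace T (defect r T : H →ₗ[ℂ] H).ker

section ScriptC1rPart

variable {r : ℝ} {T : H →L[ℂ] H} {L : Submodule ℂ H}

theorem isClosed_scriptC1rPart : IsClosed (scriptC1rPart r T : Set H) :=
  isClosed_largestReducingSubspace (isClosed_ker _)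

theorem reduces_scriptC1rPart : Reduces T (scriptC1rPart r T) :=
  reduces_largestReducingSubspace

theorem restrictedScriptC1r_scriptC1rPart : RestrictedScriptC1r r T (scriptC1rPart r T) :=
  have := (isClosed_scriptC1rPart (r := r) (T := T)).completeSpace_coe
  reduces_scriptC1rPart.restrictedScriptC1r_iff_le_ker.2 largestReducingSubspace_le

theorem le_scriptC1rPart (hL : IsClosed (L : Set H)) (h : Reduces T L)
    (hres : RestrictedScriptC1r r T L) : L ≤ scriptC1rPart r T :=
  have := hL.completeSpace_coe
  le_largestReducingSubspace h (h.restrictedScriptC1r_iff_le_ker.1 hres)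

theorem canonPair_scriptC1rPart : CanonPair r T (scriptC1rPart r T, (scriptC1rPart r T)ᗮ) := by
  have := (isClosed_scriptC1rPart (r := r) (T := T)).completeSpace_coe
  refine ⟨isClosed_scriptC1rPart, Submodule.isClosed_orthogonal _,
    fun _ hx _ hy => Submodule.inner_right_of_mem_orthogonal hx hy,
    Submodule.sup_orthogonal_of_hasOrthogonalProjection, reduces_scriptC1rPart,
    reduces_scriptC1rPart.orthogonal, restrictedScriptC1r_scriptC1rPart, ?_⟩
  rintro ⟨L, hL0, hL, hLle, hred, hres⟩
  exact hL0 (le_bot_iff.1 <| (scriptC1rPart r T).inf_orthogonal_eq_bot ▸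
    le_inf (le_scriptC1rPart hL hred hres) hLle)

theorem CanonPair.eq_scriptC1rPart {p : Submodule ℂ H × Submodule ℂ H} (hp : CanonPair r T p) :
    p = (scriptC1rPart r T, (scriptC1rPart r T)ᗮ) := by
  obtain ⟨hc1, -, horth, hsup, hred1, -, hres1, hnone⟩ := hp
  have := hc1.completeSpace_coe
  have h2 : p.2 = p.1ᗮ := by
    refine eq_of_le_of_inf_le_of_sup_le (z := p.1)
      (fun y hy => (Submodule.mem_orthogonal _ _).2 fun x hx => horth x hx y hy) ?_ ?_
    · rw [inf_comm, p.1.inf_orthogonal_eq_bot]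
      exact bot_le
    · rw [sup_comm p.2, hsup]
      exact le_top
  have hbot : scriptC1rPart r T ⊓ p.1ᗮ = ⊥ := by
    by_contra hne
    exact hnone ⟨_, hne, isClosed_scriptC1rPart.inter p.1.isClosed_orthogonal,
      h2 ▸ inf_le_right, reduces_scriptC1rPart.inf hred1.orthogonal,
      fun x hx => restrictedScriptC1r_scriptC1rPart x hx.1⟩
  have h1 : p.1 = scriptC1rPart r T := by
    refine eq_of_le_of_inf_le_of_sup_le (z := p.1ᗮ) (le_scriptC1rPart hc1 hred1 hres1) ?_ ?_
    · rw [hbot]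
      exact bot_le
    · rw [Submodule.sup_orthogonal_of_hasOrthogonalProjection]
      exact le_top
  exact Prod.ext h1 (h2.trans (by rw [h1]))

end ScriptC1rPart

theorem stmt12_general (r : ℝ) (T : H →L[ℂ] H) :
    (∃! p : Submodule ℂ H × Submodule ℂ H, CanonPair r T p) ∧
    ∀ p : Submodule ℂ H × Submodule ℂ H, CanonPair r T p →
      ∀ L : Submodule ℂ H, IsClosed (L : Set H) → Reduces T L →
        RestrictedScriptC1r r T L → L ≤ p.1 := by
  refine ⟨⟨_, canonPair_scriptC1rPart, fun p hp => hp.eq_scriptC1rPart⟩, ?_⟩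
  intro p hp L hL hred hres
  rw [hp.eq_scriptC1rPart]
  exact le_scriptC1rPart hL hred hres

theorem stmt12 (r : ℝ) (hr0 : 0 < r) (hr1 : r < 1) (T : H →L[ℂ] H) (hT : IsUnit T)
    (hmem : MemC1r r T) :
    (∃! p : Submodule ℂ H × Submodule ℂ H, CanonPair r T p) ∧
    ∀ p : Submodule ℂ H × Submodule ℂ H, CanonPair r T p →
      ∀ L : Submodule ℂ H, IsClosed (L : Set H) → Reduces T L →
        RestrictedScriptC1r r T L → L ≤ p.1 :=
  stmt12_general r T
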